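/- Let G be a graph and v a vertex of G. If the set S = V(G)∖N_G[v] induces a maximal induced subgraph of G with stability number α(G)−1, then every edge of G incident with v is an α-critical edge of G. -/
import Mathlib


open SimpleGraph

/-- The stability (independence) number of the subgraph of `G` induced on the
vertex set `S`: the maximum cardinality of a stable (independent) subset of `S`. -/
noncomputable def alphaOn {V : Type*} [Fintype V] (G : SimpleGraph V) (S : Set V) : ℕ :=
  sSup {n | ∃ s : Finset V, ↑s ⊆ S ∧ (∀ u ∈ s, ∀ v ∈ s, ¬ G.Adj u v) ∧ s.card = n}

/-- The stability (independence) number `α(G)` of `G`. -/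
noncomputable def alphaNum {V : Type*} [Fintype V] (G : SimpleGraph V) : ℕ :=
  alphaOn G Set.univ

/-- The edge `{u, v}` of `G` is an α-critical edge: deleting it increases the
stability number by one. -/
def IsCriticalEdge {V : Type*} [Fintype V] (G : SimpleGraph V) (u v : V) : Prop :=
  G.Adj u v ∧ alphaNum (G.deleteEdges {s(u, v)}) = alphaNum G + 1

/-- `G` is an α-critical graph: every edge is α-critical. -/
def IsAlphaCritical {V : Type*} [Fintype V] (G : SimpleGraph V) : Prop :=
  ∀ u v, G.Adj u v → alphaNum (G.deleteEdges {s(u, v)}) = alphaNum G + 1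

/-- `S` induces a maximal induced subgraph of `G` with stability number `α(G) - 1`:
`α(G[S]) = α(G) - 1` and adding any further vertex raises the stability number to `α(G)`. -/
def IsMaxAlphaSub {V : Type*} [Fintype V] (G : SimpleGraph V) (S : Set V) : Prop :=
  alphaOn G S + 1 = alphaNum G ∧ ∀ w ∉ S, alphaOn G (insert w S) = alphaNum G

/-- The 1-join `j(G, G₀, H, H₀)` of `G` and `H`, where `A = V(G₀)` and `B = V(H₀)`:
the disjoint union of `G` and `H` together with all edges between `V(G) ∖ A` and
`V(H) ∖ B`. -/
def oneJoin {α β : Type*} (G : SimpleGraph α) (H : SimpleGraph β)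
    (A : Set α) (B : Set β) : SimpleGraph (α ⊕ β) :=
  SimpleGraph.fromRel (fun x y =>
    (∃ a b, x = Sum.inl a ∧ y = Sum.inl b ∧ G.Adj a b) ∨
    (∃ a b, x = Sum.inr a ∧ y = Sum.inr b ∧ H.Adj a b) ∨
    (∃ a b, x = Sum.inl a ∧ y = Sum.inr b ∧ a ∉ A ∧ b ∉ B))

/-- The edge-vertex composition `c(G, e, H, v)` with `e = {v₁, v₂}` and
`N_H(v) = U₁ ⊔ U₂`: vertex set `V(G) ⊔ (V(H) ∖ {v})`, edge set
`(E(G) ∖ {e}) ∪ E(H - v) ∪ {v₁u : u ∈ U₁} ∪ {v₂u : u ∈ U₂}`. -/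
def evComp {α β : Type*} (G : SimpleGraph α) (v₁ v₂ : α) (H : SimpleGraph β) (v : β)
    (U₁ U₂ : Set β) : SimpleGraph (α ⊕ {b : β // b ≠ v}) :=
  SimpleGraph.fromRel (fun x y =>
    (∃ a b, x = Sum.inl a ∧ y = Sum.inl b ∧ G.Adj a b ∧ s(a, b) ≠ s(v₁, v₂)) ∨
    (∃ a b : {b : β // b ≠ v}, x = Sum.inr a ∧ y = Sum.inr b ∧ H.Adj a b) ∨
    (∃ b : {b : β // b ≠ v}, x = Sum.inl v₁ ∧ y = Sum.inr b ∧ (b : β) ∈ U₁) ∨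
    (∃ b : {b : β // b ≠ v}, x = Sum.inl v₂ ∧ y = Sum.inr b ∧ (b : β) ∈ U₂))

/-- The splitting `s(H, v)` of the vertex `v` of `H`, with `N_H(v) = N₁ ⊔ N₂`.
The new vertices `v′`, `v″`, `u` are represented by `Sum.inr 0`, `Sum.inr 1`,
`Sum.inr 2` respectively. -/
def splitting {β : Type*} (H : SimpleGraph β) (v : β) (N₁ N₂ : Set β) :
    SimpleGraph ({b : β // b ≠ v} ⊕ Fin 3) :=
  SimpleGraph.fromRel (fun x y =>
    (∃ a b : {b : β // b ≠ v}, x = Sum.inl a ∧ y = Sum.inl b ∧ H.Adj a b) ∨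
    (∃ a : {b : β // b ≠ v}, x = Sum.inl a ∧ y = Sum.inr 0 ∧ (a : β) ∈ N₁) ∨
    (∃ a : {b : β // b ≠ v}, x = Sum.inl a ∧ y = Sum.inr 1 ∧ (a : β) ∈ N₂) ∨
    (x = Sum.inr 0 ∧ y = Sum.inr 2) ∨ (x = Sum.inr 1 ∧ y = Sum.inr 2))

/-- The duplication `d(G, v)` of the vertex `v` of `G`: a new vertex `v′`
(represented by `Sum.inr ()`) is added, adjacent exactly to the closed
neighborhood `N_G[v]`. -/
def duplication {α : Type*} (G : SimpleGraph α) (v : α) : SimpleGraph (α ⊕ Unit) :=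
  SimpleGraph.fromRel (fun x y =>
    (∃ a b, x = Sum.inl a ∧ y = Sum.inl b ∧ G.Adj a b) ∨
    (∃ a, x = Sum.inl a ∧ y = Sum.inr () ∧ a ∈ insert v (G.neighborSet v)))

/-- A graph is duplication free iff it contains no pair of adjacent vertices
with equal closed neighborhoods. -/
def DuplicationFree {α : Type*} (G : SimpleGraph α) : Prop :=
  ∀ u v, G.Adj u v → insert u (G.neighborSet u) ≠ insert v (G.neighborSet v)

/-- `G` is 2-connected: it has at least three vertices and the deletion of any
single vertex leaves it connected. -/
def TwoConnected {V : Type*} [Fintype V] (G : SimpleGraph V) : Prop :=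
  3 ≤ Fintype.card V ∧ ∀ x : V, (G.induce {x}ᶜ).Connected

lemma alphaOn_bddAbove {V : Type*} [Fintype V] (G : SimpleGraph V) (S : Set V) :
    BddAbove {n | ∃ s : Finset V, ↑s ⊆ S ∧ (∀ u ∈ s, ∀ v ∈ s, ¬ G.Adj u v) ∧ s.card = n} :=
  ⟨Fintype.card V, fun n ⟨s, _, _, hc⟩ => hc ▸ Finset.card_le_univ s⟩

lemma le_alphaOn {V : Type*} [Fintype V] (G : SimpleGraph V) (S : Set V) (s : Finset V)
    (hs : ↑s ⊆ S) (hi : ∀ u ∈ s, ∀ v ∈ s, ¬ G.Adj u v) : s.card ≤ alphaOn G S :=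
  le_csSup (alphaOn_bddAbove G S) ⟨s, hs, hi, rfl⟩

lemma exists_alphaOn {V : Type*} [Fintype V] (G : SimpleGraph V) (S : Set V) :
    ∃ s : Finset V, ↑s ⊆ S ∧ (∀ u ∈ s, ∀ v ∈ s, ¬ G.Adj u v) ∧ s.card = alphaOn G S := by
  have h0 : (0:ℕ) ∈ {n | ∃ s : Finset V, ↑s ⊆ S ∧ (∀ u ∈ s, ∀ v ∈ s, ¬ G.Adj u v) ∧ s.card = n} :=
    ⟨∅, by simp, by simp, rfl⟩
  exact Nat.sSup_mem ⟨0, h0⟩ (alphaOn_bddAbove G S)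

/-- If `S = V(G) ∖ N_G[v]` induces a maximal induced subgraph of
`G` with stability number `α(G) - 1`, then every edge of `G` incident with `v`
is an α-critical edge of `G`. -/
theorem critical_at_vertex_of_isMaxAlphaSub {V : Type*} [Fintype V]
    (G : SimpleGraph V) (v : V)
    (h : IsMaxAlphaSub G ((insert v (G.neighborSet v))ᶜ)) :
    ∀ w, G.Adj v w → IsCriticalEdge G v w := by
  classical
  intro w hvw
  refine ⟨hvw, ?_⟩
  have h1 := h.1
  set S : Set V := (insert v (G.neighborSet v))ᶜ with hS
  set G' := G.deleteEdges {s(v, w)} with hG'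
  have hwS : w ∉ S := by
    simp [hS, Set.mem_insert_iff, SimpleGraph.mem_neighborSet, hvw]
  have hvS : v ∉ S := by simp [hS]
  have hvne : v ≠ w := G.ne_of_adj hvw
  -- lower bound : alphaNum G' ≥ alphaNum G + 1
  have h2 := h.2 w hwS
  obtain ⟨I, hIsub, hIind, hIcard⟩ := exists_alphaOn G (insert w S)
  have hwI : w ∈ I := by
    by_contra hwI
    have hIS : ↑I ⊆ S := by
      intro x hx
      rcases hIsub hx with rfl | hx'
      · exact absurd hx hwI
      · exact hx'
    have := le_alphaOn G S I hIS hIind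
    rw [h2] at hIcard
    omega
  have hvI : v ∉ I := by
    intro hv
    rcases hIsub hv with rfl | hv'
    · exact hvne rfl
    · exact hvS hv'
  have hJ : (insert v I).card ≤ alphaNum G' := by
    apply le_alphaOn G' Set.univ _ (by simp)
    intro a ha b hb hab
    rw [hG', SimpleGraph.deleteEdges_adj, Set.mem_singleton_iff] at hab
    obtain ⟨hab, habne⟩ := hab
    have key : ∀ x ∈ I, x ≠ w → ¬ G.Adj v x := by
      intro x hx hxw hadj
      rcases hIsub hx with rfl | hx'
      · exact hxw rfl
      · exact hx' (Set.mem_insert_iff.mpr (Or.inr hadj))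
    rcases Finset.mem_insert.mp ha with heqa | ha
    · subst heqa
      rcases Finset.mem_insert.mp hb with heqb | hb
      · subst heqb; exact G.irrefl hab
      · by_cases hbw : b = w
        · exact habne (by rw [hbw])
        · exact key b hb hbw hab
    · rcases Finset.mem_insert.mp hb with heqb | hb
      · rw [heqb] at hab habne
        by_cases haw : a = w
        · exact habne (by rw [haw, Sym2.eq_swap])
        · exact key a ha haw hab.symm
      · exact hIind a ha b hb hab
  have hcard : (insert v I).card = alphaNum G + 1 := by
    rw [Finset.card_insert_of_notMem hvI, hIcard, h2]
  -- upper bound : alphaNum G' ≤ alphaNum G + 1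
  obtain ⟨K, _, hKind, hKcard⟩ := exists_alphaOn G' Set.univ
  have hKe : (K.erase v).card ≤ alphaNum G := by
    apply le_alphaOn G Set.univ _ (by simp)
    intro a ha b hb hab
    have hav : a ≠ v := Finset.ne_of_mem_erase ha
    have hbv : b ≠ v := Finset.ne_of_mem_erase hb
    refine hKind a (Finset.mem_of_mem_erase ha) b (Finset.mem_of_mem_erase hb) ?_
    rw [hG', SimpleGraph.deleteEdges_adj, Set.mem_singleton_iff]
    refine ⟨hab, fun he => ?_⟩
    rw [Sym2.eq_iff] at he
    rcases he with ⟨rfl, rfl⟩ | ⟨rfl, rfl⟩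
    · exact hav rfl
    · exact hbv rfl
  have hKcard' : K.card ≤ (K.erase v).card + 1 := by
    by_cases hv : v ∈ K
    · rw [Finset.card_erase_of_mem hv]; omega
    · rw [Finset.erase_eq_of_notMem hv]; omega
  have hdef : alphaOn G' Set.univ = alphaNum G' := rfl
  omega
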